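/- Let R be a commutative ring, k ∈ ℕ, and B = MvPolynomial (Fin k) R. Every R-linear endomorphism D of B which is a differential operator of order ≤ m (Grothendieck's inductive definition) can be written as D = Σ_{n : Fin k →₀ ℕ, |n| ≤ m} b_n • D_n with coefficients b_n ∈ B, and these coefficients are uniquely determined by D. (The divided-power operators D_n form a basis of the differential operators as a left B-module.) -/

import Mathlib

/-- The divided-power operator `D_n` on `MvPolynomial σ R`, determined on monomials by
`D_n (X ^ m) = (∏ i, Nat.choose (m i) (n i)) • X ^ (m - n)` (componentwise truncated
subtraction). -/
noncomputable def dpOp (R : Type*) [CommRing R] (σ : Type*) [Fintype σ] (n : σ →₀ ℕ) :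
    MvPolynomial σ R →ₗ[R] MvPolynomial σ R :=
  (Finsupp.lsum ℕ fun m : σ →₀ ℕ =>
    (∏ i, Nat.choose (m i) (n i)) • (MvPolynomial.monomial (m - n) : R →ₗ[R] MvPolynomial σ R))
    ∘ₗ (AddMonoidAlgebra.coeffLinearEquiv R).toLinearMap

/-- `D` is a differential operator of order `≤ m` in Grothendieck's sense: every
`(m+1)`-fold iterated commutator of `D` with multiplication operators vanishes. -/
def IsDiffOpLE (R : Type*) {A : Type*} [CommRing R] [CommRing A] [Algebra R A]
    (m : ℕ) (D : A →ₗ[R] A) : Prop :=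
  ∀ a : Fin (m + 1) → A,
    Fin.foldl (m + 1)
      (fun E i => E ∘ₗ LinearMap.mulLeft R (a i) - LinearMap.mulLeft R (a i) ∘ₗ E) D = 0

/-!
`D_n` has order `≤ |n|`: its commutator with multiplication by `X i` is `D_(n - e_i)` (or `0`
when `n i = 0`), and commutators with generators of the algebra control all commutators by the
Leibniz rule. An operator of order `≤ m` vanishing on the monomials of degree `≤ m`
is zero, by induction on `m` applied to its commutators with the `X i`.

Since `D_p (X^q) = 0` unless `p ≤ q` and `D_q (X^q) = 1`, the system
`∑_(p ≤ q) b_p D_p (X^q) = D (X^q)` is unitriangular for the well-founded order on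
multi-indices. Its solution gives `D = ∑_(|n| ≤ m) b_n D_n` on monomials of degree `≤ m`,
hence everywhere; read as linear independence of the `D_n` over the polynomial ring, the same
triangularity gives uniqueness.
-/

open MvPolynomial Finset
open Finsupp (single)

attribute [local instance] LieRing.ofAssociativeRing

section DiffOp

variable {R : Type*} {A : Type*} [CommRing R] [CommRing A] [Algebra R A]

theorem lie_mulLeft_apply (D : Module.End R A) (a x : A) :
    ⁅D, LinearMap.mulLeft R a⁆ x = D (a * x) - a * D x :=
  rfl

variable (R) in
noncomputable def lieMulLeft (a : A) : Module.End R A →ₗ[A] Module.End R A where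
  toFun D := ⁅D, LinearMap.mulLeft R a⁆
  map_add' D E := add_lie D E _
  map_smul' b D := by
    ext x
    simp only [lie_mulLeft_apply, LinearMap.smul_apply, smul_eq_mul, RingHom.id_apply]
    ring

variable (R) in
/-- `diffOpLT R m` consists of the operators of order `< m`, so that the recursion starts from
`diffOpLT R 0 = ⊥` and `IsDiffOpLE R m D ↔ D ∈ diffOpLT R (m + 1)`. -/
noncomputable def diffOpLT : ℕ → Submodule A (Module.End R A)
  | 0 => ⊥
  | m + 1 => ⨅ a : A, (diffOpLT m).comap (lieMulLeft R a)

theorem mem_diffOpLT_succ {m : ℕ} {D : Module.End R A} :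
    D ∈ diffOpLT R (m + 1) ↔ ∀ a : A, ⁅D, LinearMap.mulLeft R a⁆ ∈ diffOpLT R m := by
  simp only [diffOpLT, Submodule.mem_iInf, Submodule.mem_comap]
  rfl

theorem forall_foldl_lie_eq_zero_iff (n : ℕ) (D : Module.End R A) :
    (∀ a : Fin n → A, Fin.foldl n (fun E i => ⁅E, LinearMap.mulLeft R (a i)⁆) D = 0) ↔
      D ∈ diffOpLT R n := by
  induction n generalizing D with
  | zero => simp [diffOpLT]
  | succ n ih =>
    simp only [Fin.forall_fin_succ_pi, Fin.foldl_succ, Fin.cons_zero, Fin.cons_succ, ih,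
      mem_diffOpLT_succ]

theorem isDiffOpLE_iff_mem_diffOpLT {m : ℕ} {D : Module.End R A} :
    IsDiffOpLE R m D ↔ D ∈ diffOpLT R (m + 1) :=
  forall_foldl_lie_eq_zero_iff (m + 1) D

theorem mul_mulLeft_mem_diffOpLT {m : ℕ} {D : Module.End R A} (hD : D ∈ diffOpLT R m) (b : A) :
    D * LinearMap.mulLeft R b ∈ diffOpLT R m := by
  induction m generalizing D with
  | zero => simp_all [diffOpLT]
  | succ m ih =>
    rw [mem_diffOpLT_succ] at hD ⊢
    intro a
    have hcomm : ⁅D * LinearMap.mulLeft R b, LinearMap.mulLeft R a⁆ =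
        ⁅D, LinearMap.mulLeft R a⁆ * LinearMap.mulLeft R b := by
      ext x
      simp [Ring.lie_def, mul_left_comm]
    rw [hcomm]
    exact ih (hD a)

theorem lie_mulLeft_mem_of_adjoin_eq_top {s : Set A} (hs : Algebra.adjoin R s = ⊤)
    {N : Submodule A (Module.End R A)}
    (hN : ∀ E ∈ N, ∀ b : A, E * LinearMap.mulLeft R b ∈ N)
    {D : Module.End R A} (hD : ∀ x ∈ s, ⁅D, LinearMap.mulLeft R x⁆ ∈ N) (a : A) :
    ⁅D, LinearMap.mulLeft R a⁆ ∈ N := by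
  have ha : a ∈ Algebra.adjoin R s := hs ▸ Algebra.mem_top
  induction ha using Algebra.adjoin_induction with
  | mem x hx => exact hD x hx
  | algebraMap r =>
    have hr : ⁅D, LinearMap.mulLeft R (algebraMap R A r)⁆ = 0 := by
      ext x
      simp [Ring.lie_def, ← Algebra.smul_def]
    exact hr ▸ N.zero_mem
  | add x y _ _ hx hy =>
    rw [show LinearMap.mulLeft R (x + y) = _ from map_add (LinearMap.mul R A) x y, lie_add]
    exact N.add_mem hx hy
  | mul x y _ _ hx hy =>
    have hleibniz : ⁅D, LinearMap.mulLeft R (x * y)⁆ =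
        ⁅D, LinearMap.mulLeft R x⁆ * LinearMap.mulLeft R y +
          x • ⁅D, LinearMap.mulLeft R y⁆ := by
      ext z
      simp only [lie_mulLeft_apply, LinearMap.add_apply, Module.End.mul_apply,
        LinearMap.mulLeft_apply, LinearMap.smul_apply, smul_eq_mul, mul_assoc]
      ring
    rw [hleibniz]
    exact N.add_mem (hN _ hx y) (N.smul_mem x hy)

end DiffOp

section MvPolynomial

variable {R : Type*} [CommRing R] {σ : Type*}

theorem X_mul_monomial (i : σ) (q : σ →₀ ℕ) (c : R) :
    X i * monomial q c = monomial (single i 1 + q) c := by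
  rw [monomial_single_add, pow_one]

theorem eq_zero_of_mem_diffOpLT_of_monomial {m : ℕ} {D : Module.End R (MvPolynomial σ R)}
    (hD : D ∈ diffOpLT R m) (hq : ∀ q : σ →₀ ℕ, q.degree < m → D (monomial q 1) = 0) :
    D = 0 := by
  induction m generalizing D with
  | zero => exact (Submodule.mem_bot _).1 hD
  | succ m ih =>
    have hlie : ∀ a : MvPolynomial σ R, ⁅D, LinearMap.mulLeft R a⁆ = 0 := by
      refine lie_mulLeft_mem_of_adjoin_eq_top (N := ⊥) adjoin_range_X (by simp) ?_
      rintro _ ⟨i, rfl⟩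
      refine ih (mem_diffOpLT_succ.1 hD _) fun q hq' => ?_
      rw [lie_mulLeft_apply, X_mul_monomial, hq _ (by rw [map_add, Finsupp.degree_single]; omega),
        hq _ (by omega), mul_zero, sub_zero]
    refine LinearMap.ext fun f => ?_
    calc D f = ⁅D, LinearMap.mulLeft R f⁆ 1 + f * D 1 := by
          rw [lie_mulLeft_apply, mul_one, sub_add_cancel]
      _ = 0 := by
          rw [hlie, MvPolynomial.one_def, hq 0 (by simp), LinearMap.zero_apply, mul_zero, add_zero]

end MvPolynomial

section Choose

variable {σ : Type*} [Fintype σ]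

theorem prod_choose_eq_zero_of_not_le {n q : σ →₀ ℕ} (h : ¬ n ≤ q) :
    ∏ i, (q i).choose (n i) = 0 := by
  obtain ⟨i, hi⟩ : ∃ i, q i < n i := by simpa [Finsupp.le_def] using h
  exact prod_eq_zero (mem_univ i) (Nat.choose_eq_zero_of_lt hi)

theorem prod_choose_single_add_of_eq_zero {n : σ →₀ ℕ} {i : σ} (h : n i = 0)
    (q : σ →₀ ℕ) :
    ∏ j, ((single i 1 + q : σ →₀ ℕ) j).choose (n j) = ∏ j, (q j).choose (n j) :=
  prod_congr rfl fun j _ => by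
    rcases eq_or_ne j i with rfl | hj
    · simp [h]
    · simp [Finsupp.single_eq_of_ne hj]

theorem prod_choose_single_add_single_add (q n : σ →₀ ℕ) (i : σ) :
    ∏ j, ((single i 1 + q : σ →₀ ℕ) j).choose ((single i 1 + n : σ →₀ ℕ) j) =
      ∏ j, (q j).choose (n j) + ∏ j, (q j).choose ((single i 1 + n : σ →₀ ℕ) j) := by
  classical
  simp only [Fintype.prod_eq_mul_prod_compl i, Finsupp.add_apply, Finsupp.single_eq_same]
  have hoff : ∀ j ∈ ({i}ᶜ : Finset σ), (single i 1 : σ →₀ ℕ) j = 0 :=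
    fun j hj => Finsupp.single_eq_of_ne (by simpa using hj)
  rw [add_comm 1 (q i), add_comm 1 (n i), Nat.choose_succ_succ', add_mul]
  congr 2 <;> exact prod_congr rfl fun j hj => by simp [hoff j hj]

end Choose

section DpOp

variable {R : Type*} [CommRing R] {σ : Type*} [Fintype σ]

theorem dpOp_monomial (n q : σ →₀ ℕ) (c : R) :
    dpOp R σ n (monomial q c) = (∏ i, (q i).choose (n i)) • monomial (q - n) c := by
  rw [← single_eq_monomial]
  exact Finsupp.lsum_single ℕ _ q c

theorem dpOp_monomial_self (n : σ →₀ ℕ) (c : R) : dpOp R σ n (monomial n c) = C c := by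
  simp [dpOp_monomial, Nat.choose_self]

theorem dpOp_monomial_of_not_le {n q : σ →₀ ℕ} (h : ¬ n ≤ q) (c : R) :
    dpOp R σ n (monomial q c) = 0 := by
  rw [dpOp_monomial, prod_choose_eq_zero_of_not_le h, zero_smul]

theorem lie_dpOp_mulLeft_X_of_eq_zero {n : σ →₀ ℕ} {i : σ} (h : n i = 0) :
    ⁅dpOp R σ n, LinearMap.mulLeft R (X i : MvPolynomial σ R)⁆ = 0 := by
  refine linearMap_ext fun q => LinearMap.ext fun c => ?_
  rw [LinearMap.comp_apply, LinearMap.comp_apply, LinearMap.zero_apply, lie_mulLeft_apply,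
    X_mul_monomial, dpOp_monomial, dpOp_monomial, mul_smul_comm, X_mul_monomial,
    prod_choose_single_add_of_eq_zero h]
  have hexp : single i 1 + q - n = single i 1 + (q - n) := by
    ext j
    rcases eq_or_ne j i with rfl | hj
    · simp [h]
    · simp [Finsupp.single_eq_of_ne hj]
  rw [hexp, sub_self]

theorem lie_dpOp_single_add_mulLeft_X (n : σ →₀ ℕ) (i : σ) :
    ⁅dpOp R σ (single i 1 + n), LinearMap.mulLeft R (X i : MvPolynomial σ R)⁆ =
      dpOp R σ n := by
  refine linearMap_ext fun q => LinearMap.ext fun c => ?_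
  rw [LinearMap.comp_apply, LinearMap.comp_apply, lie_mulLeft_apply, X_mul_monomial,
    dpOp_monomial, dpOp_monomial, dpOp_monomial, mul_smul_comm, X_mul_monomial,
    prod_choose_single_add_single_add, add_tsub_add_eq_tsub_left, add_smul, add_sub_assoc,
    ← smul_sub, add_eq_left]
  by_cases hle : single i 1 + n ≤ q
  · rw [add_comm _ n, ← tsub_tsub, add_tsub_cancel_of_le (le_tsub_of_add_le_right hle),
      sub_self, smul_zero]
  · rw [prod_choose_eq_zero_of_not_le hle, zero_smul]

theorem dpOp_mem_diffOpLT {m : ℕ} {n : σ →₀ ℕ} (hn : n.degree < m) :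
    dpOp R σ n ∈ diffOpLT R m := by
  induction m generalizing n with
  | zero => exact absurd hn (Nat.not_lt_zero _)
  | succ m ih =>
    refine mem_diffOpLT_succ.2 <| lie_mulLeft_mem_of_adjoin_eq_top adjoin_range_X
      (fun _ hE b => mul_mulLeft_mem_diffOpLT hE b) ?_
    rintro _ ⟨i, rfl⟩
    obtain h | h := eq_or_ne (n i) 0
    · rw [lie_dpOp_mulLeft_X_of_eq_zero h]
      exact zero_mem _
    · obtain ⟨n, rfl⟩ : ∃ n', n = single i 1 + n' :=
        ⟨n - single i 1, (add_tsub_cancel_of_le (by simpa [Nat.one_le_iff_ne_zero])).symm⟩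
      rw [map_add, Finsupp.degree_single] at hn
      rw [lie_dpOp_single_add_mulLeft_X]
      exact ih (by omega)

theorem linearIndependent_dpOp : LinearIndependent (MvPolynomial σ R) (dpOp R σ) := by
  rw [linearIndependent_iff']
  intro s g hg n
  induction n using WellFoundedLT.induction with
  | _ n ih =>
  intro hn
  have hval := congr($hg (monomial n 1))
  rw [LinearMap.sum_apply, sum_eq_single_of_mem n hn] at hval
  · simpa [dpOp_monomial_self] using hval
  · intro p hp hpn
    by_cases hpn' : p ≤ n
    · rw [ih p (lt_of_le_of_ne hpn' hpn) hp, zero_smul, LinearMap.zero_apply]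
    · rw [LinearMap.smul_apply, dpOp_monomial_of_not_le hpn', smul_zero]

theorem exists_sum_Iic_mul_dpOp_monomial_eq [DecidableEq σ]
    (v : (σ →₀ ℕ) → MvPolynomial σ R) :
    ∃ b : (σ →₀ ℕ) → MvPolynomial σ R,
      ∀ q, ∑ p ∈ Iic q, b p * dpOp R σ p (monomial q 1) = v q := by
  let b := wellFounded_lt.fix fun q (b : ∀ p < q, MvPolynomial σ R) =>
    v q - ∑ p ∈ (Iio q).attach, b p (mem_Iio.1 p.2) * dpOp R σ p (monomial q 1)
  have hb : ∀ q, b q = v q - ∑ p ∈ Iio q, b p * dpOp R σ p (monomial q 1) := fun q => by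
    rw [show b q = _ from wellFounded_lt.fix_eq _ q]
    exact congrArg (v q - ·) (sum_attach (Iio q) fun p => b p * dpOp R σ p (monomial q 1))
  refine ⟨b, fun q => ?_⟩
  rw [Iic_eq_cons_Iio, sum_cons, dpOp_monomial_self, C_1, mul_one, hb q, sub_add_cancel]

theorem sum_smul_dpOp_apply_monomial [DecidableEq σ] {S : Finset (σ →₀ ℕ)}
    {q : σ →₀ ℕ} (hq : Iic q ⊆ S) (b : (σ →₀ ℕ) → MvPolynomial σ R) :
    (∑ n ∈ S, b n • dpOp R σ n) (monomial q 1) =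
      ∑ n ∈ Iic q, b n * dpOp R σ n (monomial q 1) := by
  rw [LinearMap.sum_apply, ← sum_subset hq fun n _ hn => ?_]
  · rfl
  · rw [LinearMap.smul_apply, dpOp_monomial_of_not_le (by simpa using hn), smul_zero]

theorem exists_eq_sum_smul_dpOp {m : ℕ} {D : Module.End R (MvPolynomial σ R)}
    (hD : D ∈ diffOpLT R (m + 1)) :
    ∃ b : (σ →₀ ℕ) → MvPolynomial σ R,
      D = ∑ n ∈ (Finsupp.finite_of_degree_le m).toFinset, b n • dpOp R σ n := by
  classical
  obtain ⟨b, hb⟩ := exists_sum_Iic_mul_dpOp_monomial_eq fun q => D (monomial q 1)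
  refine ⟨b, sub_eq_zero.1 <| eq_zero_of_mem_diffOpLT_of_monomial
    (sub_mem hD (sum_mem fun n hn => Submodule.smul_mem _ _ (dpOp_mem_diffOpLT ?_)))
    fun q hq => ?_⟩
  · simpa [Nat.lt_succ_iff] using hn
  · have hIic : Iic q ⊆ (Finsupp.finite_of_degree_le m).toFinset := fun p hp => by
      simpa using (Finsupp.degree_mono (mem_Iic.1 hp)).trans (Nat.le_of_lt_succ hq)
    rw [LinearMap.sub_apply, sum_smul_dpOp_apply_monomial hIic, hb, sub_self]

end DpOp

/-- Every differential operator of order `≤ m` on `MvPolynomial (Fin k) R` can be written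
uniquely as `∑_(|n| ≤ m) b_n • D_n` with coefficients `b_n` in the polynomial ring. -/
theorem isDiffOpLE_eq_sum_dpOp (R : Type*) [CommRing R] (k m : ℕ)
    (D : MvPolynomial (Fin k) R →ₗ[R] MvPolynomial (Fin k) R)
    (hD : IsDiffOpLE R m D) :
    ∃! b : (Fin k →₀ ℕ) → MvPolynomial (Fin k) R,
      (∀ n : Fin k →₀ ℕ, m < ∑ i, n i → b n = 0) ∧
      D = ∑ᶠ n : Fin k →₀ ℕ, b n • dpOp R (Fin k) n := by
  obtain ⟨b, hDb⟩ := exists_eq_sum_smul_dpOp (isDiffOpLE_iff_mem_diffOpLT.1 hD)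
  set S := (Finsupp.finite_of_degree_le (σ := Fin k) m).toFinset
  have mem_S : ∀ n, n ∈ S ↔ ∑ i, n i ≤ m := by simp [S, Finsupp.degree_eq_sum]
  have finsum_eq : ∀ c : (Fin k →₀ ℕ) → MvPolynomial (Fin k) R,
      (∀ n, m < ∑ i, n i → c n = 0) →
        ∑ᶠ n, c n • dpOp R (Fin k) n = ∑ n ∈ S, c n • dpOp R (Fin k) n := fun c hc =>
    finsum_eq_sum_of_support_subset _ <| (Function.support_smul_subset_left _ _).trans
      fun n hn => (mem_S n).2 <| not_lt.1 fun h => hn (hc n h)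
  refine ⟨fun n => if ∑ i, n i ≤ m then b n else 0,
    ⟨fun n hn => if_neg hn.not_ge, ?_⟩, ?_⟩
  · rw [finsum_eq _ fun n hn => if_neg hn.not_ge, hDb]
    exact sum_congr rfl fun n hn => by rw [if_pos ((mem_S n).1 hn)]
  · rintro c ⟨hc, hDc⟩
    funext n
    split_ifs with hn
    · refine sub_eq_zero.1 <| linearIndependent_iff'.1 linearIndependent_dpOp S
        (fun n => c n - b n) ?_ n ((mem_S n).2 hn)
      simp only [sub_smul, sum_sub_distrib, ← finsum_eq c hc, ← hDc, ← hDb, sub_self]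
    · exact hc n (not_le.1 hn)
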